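/- arXiv:2307.11034 — 7 statements merged into one kernel-verified Lean document; each statement's English description precedes it below -/
import Mathlib

section
/- The quotient map π : N' → N_upp is an open map. -/
/-!
Two points of `Σ α, N α` are identified exactly when their images under the transition maps agree
in some (equivalently, by injectivity, every) common later index. Hence `∼` is an equivalence
relation, and the saturation of an open set `U` meets the `β`-th summand in the union of the
forward images `ψ_{αβ}(U_α)` (`α ≤ β`) and the preimages `ψ_{βα}⁻¹(U_α)` (`β ≤ α`), which are
open because each `ψ` is an open continuous map.
-/

open Topology Filter

/-- The identification relation on the disjoint union `Σ α, N α`: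
`(α,p) ∼ (β,q)` iff (`α ≤ β` and `ψ_{αβ}(p) = q`) or (`β ≤ α` and `ψ_{βα}(q) = p`). -/
def simRel {A : Type*} [LinearOrder A] {N : A → Type*}
    (ψ : ∀ α β : A, α ≤ β → N α → N β) :
    (Σ α, N α) → (Σ α, N α) → Prop :=
  fun x y =>
    (∃ h : x.1 ≤ y.1, ψ x.1 y.1 h x.2 = y.2) ∨
    (∃ h : y.1 ≤ x.1, ψ y.1 x.1 h y.2 = x.2)

open Set

theorem isOpenMap_quot_mk_of_isOpen_saturation {X : Type*} [TopologicalSpace X]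
    {r : X → X → Prop} (hr : Equivalence r)
    (hsat : ∀ U : Set X, IsOpen U → IsOpen {x | ∃ y ∈ U, r y x}) :
    IsOpenMap (Quot.mk r) := by
  intro U hU
  rw [← isQuotientMap_quot_mk.isOpen_preimage]
  convert hsat U hU using 1
  ext x
  simp only [mem_preimage, mem_image, hr.quot_mk_eq_iff]
  rfl

section SimRel

variable {A : Type*} [LinearOrder A] {N : A → Type*} {ψ : ∀ α β : A, α ≤ β → N α → N β}

theorem simRel.map_eq
    (hcomp : ∀ (α β γ : A) (h₁ : α ≤ β) (h₂ : β ≤ γ),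
      (ψ β γ h₂) ∘ (ψ α β h₁) = ψ α γ (h₁.trans h₂))
    {x y : Σ α, N α} (hxy : simRel ψ x y) (γ : A) (hx : x.1 ≤ γ) (hy : y.1 ≤ γ) :
    ψ x.1 γ hx x.2 = ψ y.1 γ hy y.2 := by
  rcases hxy with ⟨h, e⟩ | ⟨h, e⟩
  · rw [← e, ← hcomp _ _ _ h hy]; rfl
  · rw [← e, ← hcomp _ _ _ h hx]; rfl

theorem simRel_of_map_eq (hinj : ∀ (α β : A) (h : α ≤ β), Function.Injective (ψ α β h))
    (hcomp : ∀ (α β γ : A) (h₁ : α ≤ β) (h₂ : β ≤ γ),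
      (ψ β γ h₂) ∘ (ψ α β h₁) = ψ α γ (h₁.trans h₂))
    {x y : Σ α, N α} (γ : A) (hx : x.1 ≤ γ) (hy : y.1 ≤ γ)
    (e : ψ x.1 γ hx x.2 = ψ y.1 γ hy y.2) : simRel ψ x y := by
  rcases le_total x.1 y.1 with h | h
  · refine Or.inl ⟨h, hinj _ _ hy ?_⟩
    rw [← e, ← hcomp _ _ _ h hy]; rfl
  · refine Or.inr ⟨h, hinj _ _ hx ?_⟩
    rw [e, ← hcomp _ _ _ h hx]; rfl

theorem simRel_equivalence (hinj : ∀ (α β : A) (h : α ≤ β), Function.Injective (ψ α β h))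
    (hcomp : ∀ (α β γ : A) (h₁ : α ≤ β) (h₂ : β ≤ γ),
      (ψ β γ h₂) ∘ (ψ α β h₁) = ψ α γ (h₁.trans h₂)) :
    Equivalence (simRel ψ) where
  refl x := simRel_of_map_eq hinj hcomp x.1 le_rfl le_rfl rfl
  symm := Or.symm
  trans {x y z} hxy hyz := by
    let γ := max x.1 (max y.1 z.1)
    have hx : x.1 ≤ γ := le_max_left _ _
    have hy : y.1 ≤ γ := (le_max_left _ _).trans (le_max_right _ _)
    have hz : z.1 ≤ γ := (le_max_right _ _).trans (le_max_right _ _)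
    exact simRel_of_map_eq hinj hcomp γ hx hz
      ((hxy.map_eq hcomp γ hx hy).trans (hyz.map_eq hcomp γ hy hz))

theorem sigmaMk_preimage_simRel_saturation (U : Set (Σ α, N α)) (β : A) :
    Sigma.mk β ⁻¹' {x | ∃ y ∈ U, simRel ψ y x} =
      ⋃ α, ((⋃ h : α ≤ β, ψ α β h '' (Sigma.mk α ⁻¹' U)) ∪
        ⋃ h : β ≤ α, ψ β α h ⁻¹' (Sigma.mk α ⁻¹' U)) := by
  ext q
  simp only [mem_preimage, mem_ofPred_eq, mem_iUnion, mem_union, mem_image]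
  constructor
  · rintro ⟨⟨α, p⟩, hp, ⟨h, e⟩ | ⟨h, e⟩⟩
    · exact ⟨α, Or.inl ⟨h, p, hp, e⟩⟩
    · exact ⟨α, Or.inr ⟨h, by dsimp only at e; rwa [e]⟩⟩
  · rintro ⟨α, ⟨h, p, hp, e⟩ | ⟨h, hq⟩⟩
    · exact ⟨⟨α, p⟩, hp, Or.inl ⟨h, e⟩⟩
    · exact ⟨⟨α, ψ β α h q⟩, hq, Or.inr ⟨h, rfl⟩⟩

variable [∀ α, TopologicalSpace (N α)]

theorem isOpen_simRel_saturation (hopen : ∀ (α β : A) (h : α ≤ β), IsOpenMap (ψ α β h))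
    (hcont : ∀ (α β : A) (h : α ≤ β), Continuous (ψ α β h))
    {U : Set (Σ α, N α)} (hU : IsOpen U) : IsOpen {x | ∃ y ∈ U, simRel ψ y x} := by
  rw [isOpen_sigma_iff]
  intro β
  rw [sigmaMk_preimage_simRel_saturation]
  have hUα : ∀ α, IsOpen (Sigma.mk α ⁻¹' U) := isOpen_sigma_iff.mp hU
  exact isOpen_iUnion fun α => .union
    (isOpen_iUnion fun h => hopen α β h _ (hUα α))
    (isOpen_iUnion fun h => (hUα α).preimage (hcont β α h))

end SimRel

theorem quotientMap_isOpenMap_general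
    {A : Type*} [LinearOrder A]
    {N : A → Type*} [∀ α, TopologicalSpace (N α)]
    (ψ : ∀ α β : A, α ≤ β → N α → N β)
    (hψ : ∀ (α β : A) (h : α ≤ β), IsOpenEmbedding (ψ α β h))
    (hψcomp : ∀ (α β γ : A) (h₁ : α ≤ β) (h₂ : β ≤ γ),
      (ψ β γ h₂) ∘ (ψ α β h₁) = ψ α γ (h₁.trans h₂)) :
    IsOpenMap (Quot.mk (simRel ψ) : (Σ α, N α) → Quot (simRel ψ)) :=
  isOpenMap_quot_mk_of_isOpen_saturation
    (simRel_equivalence (fun α β h => (hψ α β h).injective) hψcomp)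
    fun _ => isOpen_simRel_saturation (fun α β h => (hψ α β h).isOpenMap)
      (fun α β h => (hψ α β h).continuous)

/-- The quotient map `π : N' → N_upp` is an open map. -/
theorem quotientMap_isOpenMap
    {M : Type*} [TopologicalSpace M]
    {A : Type*} [LinearOrder A] [Nonempty A]
    {N : A → Type*} [∀ α, TopologicalSpace (N α)]
    (ι : ∀ α, M → N α) (hι : ∀ α, IsOpenEmbedding (ι α))
    (ψ : ∀ α β : A, α ≤ β → N α → N β)
    (hψ : ∀ (α β : A) (h : α ≤ β), IsOpenEmbedding (ψ α β h))
    (hψι : ∀ (α β : A) (h : α ≤ β), (ψ α β h) ∘ (ι α) = ι β)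
    (hψid : ∀ (α : A) (h : α ≤ α), ψ α α h = id)
    (hψcomp : ∀ (α β γ : A) (h₁ : α ≤ β) (h₂ : β ≤ γ),
      (ψ β γ h₂) ∘ (ψ α β h₁) = ψ α γ (h₁.trans h₂)) :
    IsOpenMap (Quot.mk (simRel ψ) : (Σ α, N α) → Quot (simRel ψ)) :=
  quotientMap_isOpenMap_general ψ hψ hψcomp
end

section
/- For each α ∈ A, the map j_α : N_α → N_upp is an open embedding, i.e., a homeomorphism onto an open subset of N_upp; moreover j_β ∘ ψ_{αβ} = j_α for all α ≤ β in A. -/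
/-! Points of different `N α` are identified only along the maps `ψ`, and since these are
injective and compatible, `∼` is already an equivalence relation: `(α, p)` and `(β, q)` are
identified exactly when one of `ψ_{αβ}(p) = q`, `ψ_{βα}(q) = p` holds. Hence `j_α` is injective,
and the `β`-slice of the saturation of `j_α(U)` is `ψ_{αβ}(U)` or `ψ_{βα}⁻¹(U)`, which is open
when `U` is; so `j_α` is open. -/

open Topology Filter

namespace simRel

variable {A : Type*} [LinearOrder A] {N : A → Type*} {ψ : ∀ α β : A, α ≤ β → N α → N β}

theorem equivalence (hinj : ∀ (α β : A) (h : α ≤ β), Function.Injective (ψ α β h))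
    (hid : ∀ (α : A) (h : α ≤ α), ψ α α h = id)
    (hcomp : ∀ (α β γ : A) (h₁ : α ≤ β) (h₂ : β ≤ γ),
      (ψ β γ h₂) ∘ (ψ α β h₁) = ψ α γ (h₁.trans h₂)) :
    Equivalence (simRel ψ) := by
  have hcomp' : ∀ α β γ (h₁ : α ≤ β) (h₂ : β ≤ γ) p,
      ψ β γ h₂ (ψ α β h₁ p) = ψ α γ (h₁.trans h₂) p :=
    fun α β γ h₁ h₂ p => congrFun (hcomp α β γ h₁ h₂) p
  refine ⟨fun ⟨α, p⟩ => Or.inl ⟨le_rfl, by rw [hid]; rfl⟩, fun h => h.symm, ?_⟩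
  rintro ⟨α, p⟩ ⟨β, q⟩ ⟨γ, r⟩ (⟨hαβ, e₁⟩ | ⟨hβα, e₁⟩) (⟨hβγ, e₂⟩ | ⟨hγβ, e₂⟩)
  · exact Or.inl ⟨hαβ.trans hβγ, by rw [← e₂, ← e₁, hcomp']⟩
  · rcases le_total α γ with hαγ | hγα
    · exact Or.inl ⟨hαγ, hinj γ β hγβ (by rw [hcomp', e₂, ← e₁])⟩
    · exact Or.inr ⟨hγα, hinj α β hαβ (by rw [hcomp', e₂, ← e₁])⟩
  · rcases le_total α γ with hαγ | hγα
    · exact Or.inl ⟨hαγ, by rw [← e₁, hcomp']; exact e₂⟩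
    · exact Or.inr ⟨hγα, by rw [← e₂, hcomp']; exact e₁⟩
  · exact Or.inr ⟨hγβ.trans hβα, by rw [← e₁, ← e₂, hcomp']⟩

variable (ψ) in
/-- The map `j_α : N_α → N_upp`. -/
def incl (α : A) : N α → Quot (simRel ψ) := fun p => Quot.mk _ ⟨α, p⟩

theorem incl_comp {α β : A} (h : α ≤ β) : incl ψ β ∘ ψ α β h = incl ψ α :=
  funext fun _ => Quot.sound (Or.inr ⟨h, rfl⟩)

theorem incl_eq_incl_iff (hequiv : Equivalence (simRel ψ)) {α β : A} {p : N α} {q : N β} :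
    incl ψ α p = incl ψ β q ↔ simRel ψ ⟨α, p⟩ ⟨β, q⟩ :=
  Quot.eq.trans hequiv.eqvGen_iff

theorem incl_injective (hequiv : Equivalence (simRel ψ))
    (hid : ∀ (α : A) (h : α ≤ α), ψ α α h = id) (α : A) :
    Function.Injective (incl ψ α) := by
  intro p p' hpp'
  rcases (incl_eq_incl_iff hequiv).mp hpp' with ⟨h, e⟩ | ⟨h, e⟩
  · rwa [hid] at e
  · rw [hid] at e
    exact e.symm

theorem preimage_incl_image_incl (hequiv : Equivalence (simRel ψ)) {α : A} (β : A)
    (U : Set (N α)) :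
    incl ψ β ⁻¹' (incl ψ α '' U) =
      (⋃ h : α ≤ β, ψ α β h '' U) ∪ ⋃ h : β ≤ α, ψ β α h ⁻¹' U := by
  ext q
  simp only [Set.mem_preimage, Set.mem_image, incl_eq_incl_iff hequiv, simRel, Set.mem_union,
    Set.mem_iUnion]
  constructor
  · rintro ⟨p, hp, ⟨h, e⟩ | ⟨h, e⟩⟩
    · exact Or.inl ⟨h, p, hp, e⟩
    · exact Or.inr ⟨h, e ▸ hp⟩
  · rintro (⟨h, p, hp, e⟩ | ⟨h, hq⟩)
    · exact ⟨p, hp, Or.inl ⟨h, e⟩⟩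
    · exact ⟨ψ β α h q, hq, Or.inr ⟨h, rfl⟩⟩

variable [∀ α, TopologicalSpace (N α)]

theorem continuous_incl (α : A) : Continuous (incl ψ α) :=
  continuous_quot_mk.comp continuous_sigmaMk

theorem isOpenMap_incl (hequiv : Equivalence (simRel ψ))
    (hopen : ∀ (α β : A) (h : α ≤ β), IsOpenMap (ψ α β h))
    (hcont : ∀ (α β : A) (h : α ≤ β), Continuous (ψ α β h)) (α : A) :
    IsOpenMap (incl ψ α) := by
  intro U hU
  rw [← isQuotientMap_quot_mk.isOpen_preimage, isOpen_sigma_iff]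
  intro β
  rw [← Set.preimage_comp]
  change IsOpen (incl ψ β ⁻¹' (incl ψ α '' U))
  rw [preimage_incl_image_incl hequiv]
  exact (isOpen_iUnion fun h => hopen α β h U hU).union
    (isOpen_iUnion fun h => (hcont β α h).isOpen_preimage U hU)

theorem isOpenEmbedding_incl (hψ : ∀ (α β : A) (h : α ≤ β), IsOpenEmbedding (ψ α β h))
    (hid : ∀ (α : A) (h : α ≤ α), ψ α α h = id)
    (hcomp : ∀ (α β γ : A) (h₁ : α ≤ β) (h₂ : β ≤ γ),
      (ψ β γ h₂) ∘ (ψ α β h₁) = ψ α γ (h₁.trans h₂)) (α : A) :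
    IsOpenEmbedding (incl ψ α) :=
  have hequiv := equivalence (fun α β h => (hψ α β h).injective) hid hcomp
  .of_continuous_injective_isOpenMap (continuous_incl α) (incl_injective hequiv hid α)
    (isOpenMap_incl hequiv (fun α β h => (hψ α β h).isOpenMap)
      (fun α β h => (hψ α β h).continuous) α)

end simRel

theorem j_isOpenEmbedding_general
    {A : Type*} [LinearOrder A]
    {N : A → Type*} [∀ α, TopologicalSpace (N α)]
    (ψ : ∀ α β : A, α ≤ β → N α → N β)
    (hψ : ∀ (α β : A) (h : α ≤ β), IsOpenEmbedding (ψ α β h))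
    (hψid : ∀ (α : A) (h : α ≤ α), ψ α α h = id)
    (hψcomp : ∀ (α β γ : A) (h₁ : α ≤ β) (h₂ : β ≤ γ),
      (ψ β γ h₂) ∘ (ψ α β h₁) = ψ α γ (h₁.trans h₂)) :
    (∀ α : A, IsOpenEmbedding (fun p : N α => Quot.mk (simRel ψ) ⟨α, p⟩)) ∧
    (∀ (α β : A) (h : α ≤ β),
      (fun p : N α => Quot.mk (simRel ψ) ⟨β, ψ α β h p⟩) =
        (fun p : N α => Quot.mk (simRel ψ) ⟨α, p⟩)) :=
  ⟨simRel.isOpenEmbedding_incl hψ hψid hψcomp, fun _ _ h => simRel.incl_comp h⟩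

/-- Each `j_α : N_α → N_upp` is an open embedding, and `j_β ∘ ψ_{αβ} = j_α` for `α ≤ β`. -/
theorem j_isOpenEmbedding
    {M : Type*} [TopologicalSpace M]
    {A : Type*} [LinearOrder A] [Nonempty A]
    {N : A → Type*} [∀ α, TopologicalSpace (N α)]
    (ι : ∀ α, M → N α) (hι : ∀ α, IsOpenEmbedding (ι α))
    (ψ : ∀ α β : A, α ≤ β → N α → N β)
    (hψ : ∀ (α β : A) (h : α ≤ β), IsOpenEmbedding (ψ α β h))
    (hψι : ∀ (α β : A) (h : α ≤ β), (ψ α β h) ∘ (ι α) = ι β)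
    (hψid : ∀ (α : A) (h : α ≤ α), ψ α α h = id)
    (hψcomp : ∀ (α β γ : A) (h₁ : α ≤ β) (h₂ : β ≤ γ),
      (ψ β γ h₂) ∘ (ψ α β h₁) = ψ α γ (h₁.trans h₂)) :
    (∀ α : A, IsOpenEmbedding (fun p : N α => Quot.mk (simRel ψ) ⟨α, p⟩)) ∧
    (∀ (α β : A) (h : α ≤ β),
      (fun p : N α => Quot.mk (simRel ψ) ⟨β, ψ α β h p⟩) =
        (fun p : N α => Quot.mk (simRel ψ) ⟨α, p⟩)) :=
  j_isOpenEmbedding_general ψ hψ hψid hψcomp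
end

section
/- One has π⁻¹(ι_upp(M)) = {(α,p) ∈ N' : p ∈ ι_α(M)}. Moreover, if for every α ∈ A and every point p ∈ N_α \ ι_α(M) there exists a continuous curve γ : [0,1) → M with ι_α(γ(t)) → p as t → 1⁻, then for every point p ∈ N_upp \ ι_upp(M) there exists a continuous curve γ : [0,1) → M with ι_upp(γ(t)) → p as t → 1⁻. -/
open Topology Filter

/-!
Since every `ψ_{αβ}` is injective and carries `ι_α` to `ι_β`, a point of `N_α` lies in `ι_α(M)`
exactly when its image in `N_β` lies in `ι_β(M)`; so membership in the image of `M` is invariant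
under `∼` and descends to `N_upp`, which gives the description of `π⁻¹(ι_upp(M))`. A boundary point
of `N_upp` is `j_α(q)` for a boundary point `q` of some `N_α`, and `j_α` is continuous with
`j_α ∘ ι_α = ι_upp`, so `j_α` carries a curve approaching `q` to one approaching `j_α(q)`.
-/

section

variable {M A : Type*} [LinearOrder A] {N : A → Type*} (ι : ∀ α, M → N α)
  {ψ : ∀ α β : A, α ≤ β → N α → N β}

theorem mem_range_iota_iff_of_psi_eq (hψ : ∀ α β h, Function.Injective (ψ α β h))
    (hψι : ∀ α β h, ψ α β h ∘ ι α = ι β) {α β : A} (h : α ≤ β) {p : N α} {q : N β}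
    (hpq : ψ α β h p = q) :
    p ∈ Set.range (ι α) ↔ q ∈ Set.range (ι β) := by
  rw [← hpq, ← hψι α β h, Set.range_comp, (hψ α β h).mem_set_image]

theorem simRel.mem_range_iota_iff (hψ : ∀ α β h, Function.Injective (ψ α β h))
    (hψι : ∀ α β h, ψ α β h ∘ ι α = ι β) {x y : Σ α, N α} (hxy : simRel ψ x y) :
    x.2 ∈ Set.range (ι x.1) ↔ y.2 ∈ Set.range (ι y.1) := by
  rcases hxy with ⟨h, hxy⟩ | ⟨h, hyx⟩
  · exact mem_range_iota_iff_of_psi_eq ι hψ hψι h hxy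
  · exact (mem_range_iota_iff_of_psi_eq ι hψ hψι h hyx).symm

theorem quot_mk_iota_eq (hψι : ∀ α β h, ψ α β h ∘ ι α = ι β) (α β : A) (m : M) :
    Quot.mk (simRel ψ) ⟨α, ι α m⟩ = Quot.mk (simRel ψ) ⟨β, ι β m⟩ := by
  apply Quot.sound
  rcases le_total α β with h | h
  · exact Or.inl ⟨h, congrFun (hψι α β h) m⟩
  · exact Or.inr ⟨h, congrFun (hψι β α h) m⟩

theorem preimage_range_quot_mk_iota (hψ : ∀ α β h, Function.Injective (ψ α β h))
    (hψι : ∀ α β h, ψ α β h ∘ ι α = ι β) (α₀ : A) :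
    Quot.mk (simRel ψ) ⁻¹' Set.range (fun m => Quot.mk (simRel ψ) ⟨α₀, ι α₀ m⟩) =
      {x : Σ α, N α | x.2 ∈ Set.range (ι x.1)} := by
  ext ⟨β, p⟩
  constructor
  · rintro ⟨m, hm⟩
    have hmem := congrArg (Quot.lift (fun x : Σ α, N α => x.2 ∈ Set.range (ι x.1))
      fun _ _ hxy => propext (simRel.mem_range_iota_iff ι hψ hψι hxy)) hm
    exact cast hmem ⟨m, rfl⟩
  · rintro ⟨m, hm⟩
    change ι β m = p at hm
    exact ⟨m, hm ▸ quot_mk_iota_eq ι hψι α₀ β m⟩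

variable [TopologicalSpace M] [∀ α, TopologicalSpace (N α)]

theorem exists_curve_tendsto_quot_mk (hψι : ∀ α β h, ψ α β h ∘ ι α = ι β) (α₀ : A)
    (hcurve : ∀ (α : A) (p : N α), p ∉ Set.range (ι α) →
      ∃ γ : ℝ → M, ContinuousOn γ (Set.Ico 0 1) ∧
        Tendsto (fun t => ι α (γ t)) (𝓝[<] (1:ℝ)) (𝓝 p))
    (p : Quot (simRel ψ))
    (hp : p ∉ Set.range (fun m => Quot.mk (simRel ψ) ⟨α₀, ι α₀ m⟩)) :
    ∃ γ : ℝ → M, ContinuousOn γ (Set.Ico 0 1) ∧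
      Tendsto (fun t => Quot.mk (simRel ψ) ⟨α₀, ι α₀ (γ t)⟩) (𝓝[<] (1:ℝ)) (𝓝 p) := by
  obtain ⟨⟨α, q⟩, rfl⟩ := Quot.exists_rep p
  have hq : q ∉ Set.range (ι α) := by
    rintro ⟨m, rfl⟩
    exact hp ⟨m, quot_mk_iota_eq ι hψι α₀ α m⟩
  obtain ⟨γ, hγ, hγq⟩ := hcurve α q hq
  have hj : Continuous fun y : N α => Quot.mk (simRel ψ) ⟨α, y⟩ :=
    continuous_quot_mk.comp continuous_sigmaMk
  refine ⟨γ, hγ, ?_⟩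
  simp only [quot_mk_iota_eq ι hψι α₀ α]
  exact (hj.tendsto q).comp hγq

end

theorem preimage_iotaUpp_and_boundary_curves_general
    {M : Type*} [TopologicalSpace M]
    {A : Type*} [LinearOrder A]
    {N : A → Type*} [∀ α, TopologicalSpace (N α)]
    (ι : ∀ α, M → N α)
    (ψ : ∀ α β : A, α ≤ β → N α → N β)
    (hψ : ∀ (α β : A) (h : α ≤ β), IsOpenEmbedding (ψ α β h))
    (hψι : ∀ (α β : A) (h : α ≤ β), (ψ α β h) ∘ (ι α) = ι β)
    (α₀ : A) :
    ((Quot.mk (simRel ψ)) ⁻¹'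
        (Set.range (fun m => Quot.mk (simRel ψ) ⟨α₀, ι α₀ m⟩)) =
      {x : Σ α, N α | x.2 ∈ Set.range (ι x.1)}) ∧
    ((∀ (α : A) (p : N α), p ∉ Set.range (ι α) →
        ∃ γ : ℝ → M, ContinuousOn γ (Set.Ico 0 1) ∧
          Tendsto (fun t => ι α (γ t)) (𝓝[<] (1:ℝ)) (𝓝 p)) →
      ∀ p : Quot (simRel ψ),
        p ∉ Set.range (fun m => Quot.mk (simRel ψ) ⟨α₀, ι α₀ m⟩) →
          ∃ γ : ℝ → M, ContinuousOn γ (Set.Ico 0 1) ∧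
            Tendsto (fun t => Quot.mk (simRel ψ) ⟨α₀, ι α₀ (γ t)⟩)
              (𝓝[<] (1:ℝ)) (𝓝 p)) :=
  ⟨preimage_range_quot_mk_iota ι (fun α β h => (hψ α β h).injective) hψι α₀,
    exists_curve_tendsto_quot_mk ι hψι α₀⟩

/-- `π⁻¹(ι_upp(M))` consists exactly of the points `(α,p)` with `p ∈ ι_α(M)`; and if every
boundary point of every `N_α` is a limit of `ι_α ∘ γ` for some continuous curve
`γ : [0,1) → M`, then the same holds for boundary points of `N_upp` and `ι_upp`. -/
theorem preimage_iotaUpp_and_boundary_curves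
    {M : Type*} [TopologicalSpace M]
    {A : Type*} [LinearOrder A] [Nonempty A]
    {N : A → Type*} [∀ α, TopologicalSpace (N α)]
    (ι : ∀ α, M → N α) (hι : ∀ α, IsOpenEmbedding (ι α))
    (ψ : ∀ α β : A, α ≤ β → N α → N β)
    (hψ : ∀ (α β : A) (h : α ≤ β), IsOpenEmbedding (ψ α β h))
    (hψι : ∀ (α β : A) (h : α ≤ β), (ψ α β h) ∘ (ι α) = ι β)
    (hψid : ∀ (α : A) (h : α ≤ α), ψ α α h = id)
    (hψcomp : ∀ (α β γ : A) (h₁ : α ≤ β) (h₂ : β ≤ γ),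
      (ψ β γ h₂) ∘ (ψ α β h₁) = ψ α γ (h₁.trans h₂))
    (α₀ : A) :
    ((Quot.mk (simRel ψ)) ⁻¹'
        (Set.range (fun m => Quot.mk (simRel ψ) ⟨α₀, ι α₀ m⟩)) =
      {x : Σ α, N α | x.2 ∈ Set.range (ι x.1)}) ∧
    ((∀ (α : A) (p : N α), p ∉ Set.range (ι α) →
        ∃ γ : ℝ → M, ContinuousOn γ (Set.Ico 0 1) ∧
          Tendsto (fun t => ι α (γ t)) (𝓝[<] (1:ℝ)) (𝓝 p)) →
      ∀ p : Quot (simRel ψ),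
        p ∉ Set.range (fun m => Quot.mk (simRel ψ) ⟨α₀, ι α₀ m⟩) →
          ∃ γ : ℝ → M, ContinuousOn γ (Set.Ico 0 1) ∧
            Tendsto (fun t => Quot.mk (simRel ψ) ⟨α₀, ι α₀ (γ t)⟩)
              (𝓝[<] (1:ℝ)) (𝓝 p)) :=
  preimage_iotaUpp_and_boundary_curves_general ι ψ hψ hψι α₀
end

section
/- For every index set J and every family of functions c_j : (0,1) → M (j ∈ J), one has π⁻¹(O_J(N_upp, ι_upp)) = {(α,p) ∈ N' : p ∈ O_J(N_α, ι_α)}; equivalently, j_α⁻¹(O_J(N_upp, ι_upp)) = O_J(N_α, ι_α) for every α ∈ A. -/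
/-!
Each `j_α : N_α → N_upp` is an open embedding. Indeed `∼` is an equivalence relation, because two
points are identified exactly when they agree after being pushed to a common later stage, and the
trace of `j_α(U)` on `N_β` is `ψ_{αβ}(U)` or `ψ_{βα}⁻¹(U)`. Moreover `ι_upp = j_α ∘ ι_α` for every
`α`. Finally, for any embedding `g` one has `g⁻¹(O_J(Z, g ∘ f)) = O_J(Y, f)`: injectivity of `g`
handles the curve points, and since `g` is inducing, a curve converges to `y` iff its image
converges to `g y`.
-/

open Topology Filter

/-- The "thickening" `O_J(Z, f)` associated to a family of curves `c_j : (0,1) → M` and a map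
`f : M → Z`: all points `f (c j t)` with `t ∈ (0,1)`, together with all limits of
`t ↦ f (c j t)` as `t → 1⁻`. -/
def OSet {M Z : Type*} [TopologicalSpace Z] {J : Type*} (c : J → ℝ → M) (f : M → Z) :
    Set Z :=
  {z | (∃ j : J, ∃ t ∈ Set.Ioo (0:ℝ) 1, f (c j t) = z) ∨
       (∃ j : J, Filter.Tendsto (fun t => f (c j t)) (nhdsWithin 1 (Set.Ioo (0:ℝ) 1)) (nhds z))}

section Gluing

variable {A : Type*} [LinearOrder A] {N : A → Type*} {ψ : ∀ α β : A, α ≤ β → N α → N β}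

theorem simRel_comm {x y : Σ α, N α} : simRel ψ x y ↔ simRel ψ y x :=
  Or.comm

theorem quot_mk_sigmaMk_comp_eq {M : Type*} {ι : ∀ α, M → N α}
    (hψι : ∀ α β h, ψ α β h ∘ ι α = ι β) (α β : A) :
    (fun m => Quot.mk (simRel ψ) ⟨α, ι α m⟩) = fun m => Quot.mk (simRel ψ) ⟨β, ι β m⟩ := by
  funext m
  refine Quot.sound ?_
  rcases le_total α β with h | h
  · exact Or.inl ⟨h, congrFun (hψι α β h) m⟩
  · exact Or.inr ⟨h, congrFun (hψι β α h) m⟩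

variable [DirectedSystem N (ψ · · ·)]

theorem simRel_mk_mk_iff {α β : A} (h : α ≤ β) {p : N α}
    {q : N β} : simRel ψ ⟨α, p⟩ ⟨β, q⟩ ↔ ψ α β h p = q := by
  refine ⟨?_, fun e => Or.inl ⟨h, e⟩⟩
  rintro (⟨_, e⟩ | ⟨h', e⟩)
  · exact e
  · dsimp only at h' e
    rw [← e, DirectedSystem.map_map (f := (ψ · · ·)) h' h,
      DirectedSystem.map_self (f := (ψ · · ·))]

variable (hψinj : ∀ α β h, Function.Injective (ψ α β h))
include hψinj

theorem simRel_iff_map_eq_map {x y : Σ α, N α} {γ : A} (hx : x.1 ≤ γ) (hy : y.1 ≤ γ) :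
    simRel ψ x y ↔ ψ x.1 γ hx x.2 = ψ y.1 γ hy y.2 := by
  obtain ⟨α, p⟩ := x
  obtain ⟨β, q⟩ := y
  rcases le_total α β with h | h
  · rw [simRel_mk_mk_iff h, ← DirectedSystem.map_map (f := (ψ · · ·)) h hy, (hψinj β γ hy).eq_iff]
  · rw [simRel_comm, simRel_mk_mk_iff h, ← DirectedSystem.map_map (f := (ψ · · ·)) h hx,
      (hψinj α γ hx).eq_iff, eq_comm]

theorem simRel_equivalence_s7 : Equivalence (simRel ψ) where
  refl x := (simRel_iff_map_eq_map hψinj le_rfl le_rfl).2 rfl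
  symm := simRel_comm.1
  trans {x y z} hxy hyz := by
    have hx : x.1 ≤ max x.1 (max y.1 z.1) := le_max_left _ _
    have hy : y.1 ≤ max x.1 (max y.1 z.1) := (le_max_left _ _).trans (le_max_right _ _)
    have hz : z.1 ≤ max x.1 (max y.1 z.1) := (le_max_right _ _).trans (le_max_right _ _)
    rw [simRel_iff_map_eq_map hψinj hx hy] at hxy
    rw [simRel_iff_map_eq_map hψinj hy hz] at hyz
    exact (simRel_iff_map_eq_map hψinj hx hz).2 (hxy.trans hyz)

theorem quot_mk_eq_quot_mk_iff {x y : Σ α, N α} :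
    Quot.mk (simRel ψ) x = Quot.mk (simRel ψ) y ↔ simRel ψ x y :=
  Quot.eq.trans (simRel_equivalence_s7 hψinj).eqvGen_iff

theorem quot_mk_sigmaMk_injective (α : A) :
    Function.Injective fun p : N α => Quot.mk (simRel ψ) ⟨α, p⟩ := fun p q h => by
  rwa [quot_mk_eq_quot_mk_iff hψinj, simRel_mk_mk_iff le_rfl,
    DirectedSystem.map_self (f := (ψ · · ·))] at h

end Gluing

section Topology

variable {A : Type*} [LinearOrder A] {N : A → Type*} [∀ α, TopologicalSpace (N α)]
  {ψ : ∀ α β : A, α ≤ β → N α → N β} [DirectedSystem N (ψ · · ·)]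
  (hψ : ∀ α β h, IsOpenEmbedding (ψ α β h))
include hψ

theorem isOpenMap_quot_mk_sigmaMk (α : A) :
    IsOpenMap fun p : N α => Quot.mk (simRel ψ) ⟨α, p⟩ := by
  have hψinj := fun α β h => (hψ α β h).injective
  intro U hU
  show IsOpen (Quot.mk (simRel ψ) ⁻¹' _)
  refine isOpen_sigma_iff.2 fun β => ?_
  have htrace : Sigma.mk β ⁻¹' (Quot.mk (simRel ψ) ⁻¹'
      ((fun p : N α => Quot.mk (simRel ψ) ⟨α, p⟩) '' U)) =
      {q | ∃ u ∈ U, simRel ψ ⟨α, u⟩ ⟨β, q⟩} := by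
    ext q
    simp only [Set.mem_preimage, Set.mem_image, quot_mk_eq_quot_mk_iff hψinj, Set.mem_ofPred_eq]
  rw [htrace]
  rcases le_total α β with h | h
  · simp only [simRel_mk_mk_iff h]
    exact (hψ α β h).isOpenMap U hU
  · simp only [simRel_comm (ψ := ψ) (x := ⟨α, _⟩), simRel_mk_mk_iff h, exists_eq_right']
    exact hU.preimage (hψ β α h).continuous

theorem isOpenEmbedding_quot_mk_sigmaMk (α : A) :
    IsOpenEmbedding fun p : N α => Quot.mk (simRel ψ) ⟨α, p⟩ :=
  .of_continuous_injective_isOpenMap (continuous_quot_mk.comp continuous_sigmaMk)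
    (quot_mk_sigmaMk_injective (fun α β h => (hψ α β h).injective) α)
    (isOpenMap_quot_mk_sigmaMk hψ α)

end Topology

theorem preimage_OSet_comp {M Y Z J : Type*} [TopologicalSpace Y] [TopologicalSpace Z]
    {g : Y → Z} (hg : IsEmbedding g) (f : M → Y) (c : J → ℝ → M) :
    g ⁻¹' OSet c (g ∘ f) = OSet c f := by
  ext y
  simp only [OSet, Set.mem_preimage, Set.mem_ofPred_eq, Function.comp_apply, hg.injective.eq_iff,
    hg.isInducing.tendsto_nhds_iff, Function.comp_def]

theorem preimage_OSet_general
    {M : Type*}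
    {A : Type*} [LinearOrder A]
    {N : A → Type*} [∀ α, TopologicalSpace (N α)]
    (ι : ∀ α, M → N α)
    (ψ : ∀ α β : A, α ≤ β → N α → N β)
    (hψ : ∀ (α β : A) (h : α ≤ β), IsOpenEmbedding (ψ α β h))
    (hψι : ∀ (α β : A) (h : α ≤ β), (ψ α β h) ∘ (ι α) = ι β)
    (hψid : ∀ (α : A) (h : α ≤ α), ψ α α h = id)
    (hψcomp : ∀ (α β γ : A) (h₁ : α ≤ β) (h₂ : β ≤ γ),
      (ψ β γ h₂) ∘ (ψ α β h₁) = ψ α γ (h₁.trans h₂))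
    (α₀ : A) {J : Type*} (c : J → ℝ → M) :
    ((Quot.mk (simRel ψ)) ⁻¹'
        (OSet c (fun m => Quot.mk (simRel ψ) ⟨α₀, ι α₀ m⟩)) =
      {x : Σ α, N α | x.2 ∈ OSet c (ι x.1)}) ∧
    (∀ α : A, (fun p : N α => Quot.mk (simRel ψ) ⟨α, p⟩) ⁻¹'
        (OSet c (fun m => Quot.mk (simRel ψ) ⟨α₀, ι α₀ m⟩)) = OSet c (ι α)) := by
  have : DirectedSystem N (ψ · · ·) :=
    ⟨fun α p => congrFun (hψid α le_rfl) p, fun _ _ _ h₁ h₂ p => congrFun (hψcomp _ _ _ h₁ h₂) p⟩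
  have hj : ∀ α, (fun p : N α => Quot.mk (simRel ψ) ⟨α, p⟩) ⁻¹'
      (OSet c (fun m => Quot.mk (simRel ψ) ⟨α₀, ι α₀ m⟩)) = OSet c (ι α) := fun α => by
    rw [quot_mk_sigmaMk_comp_eq hψι α₀ α]
    exact preimage_OSet_comp (isOpenEmbedding_quot_mk_sigmaMk hψ α).isEmbedding (ι α) c
  exact ⟨Set.ext fun x => Set.ext_iff.1 (hj x.1) x.2, hj⟩

/-- `π⁻¹(O_J(N_upp, ι_upp))` consists exactly of the points `(α,p)` with
`p ∈ O_J(N_α, ι_α)`; equivalently `j_α⁻¹(O_J(N_upp, ι_upp)) = O_J(N_α, ι_α)` for all `α`. -/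
theorem preimage_OSet
    {M : Type*} [TopologicalSpace M]
    {A : Type*} [LinearOrder A] [Nonempty A]
    {N : A → Type*} [∀ α, TopologicalSpace (N α)]
    (ι : ∀ α, M → N α) (hι : ∀ α, IsOpenEmbedding (ι α))
    (ψ : ∀ α β : A, α ≤ β → N α → N β)
    (hψ : ∀ (α β : A) (h : α ≤ β), IsOpenEmbedding (ψ α β h))
    (hψι : ∀ (α β : A) (h : α ≤ β), (ψ α β h) ∘ (ι α) = ι β)
    (hψid : ∀ (α : A) (h : α ≤ α), ψ α α h = id)
    (hψcomp : ∀ (α β γ : A) (h₁ : α ≤ β) (h₂ : β ≤ γ),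
      (ψ β γ h₂) ∘ (ψ α β h₁) = ψ α γ (h₁.trans h₂))
    (α₀ : A) {J : Type*} (c : J → ℝ → M) :
    ((Quot.mk (simRel ψ)) ⁻¹'
        (OSet c (fun m => Quot.mk (simRel ψ) ⟨α₀, ι α₀ m⟩)) =
      {x : Σ α, N α | x.2 ∈ OSet c (ι x.1)}) ∧
    (∀ α : A, (fun p : N α => Quot.mk (simRel ψ) ⟨α, p⟩) ⁻¹'
        (OSet c (fun m => Quot.mk (simRel ψ) ⟨α₀, ι α₀ m⟩)) = OSet c (ι α)) :=
  preimage_OSet_general ι ψ hψ hψι hψid hψcomp α₀ c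
end

section
/- Assume every N_α (α ∈ A) is Hausdorff. Let J be an index set with functions c_j : (0,1) → M (j ∈ J), fix α ∈ A, and suppose there is an open set U ⊆ N_α whose closure in N_α is compact and such that O_J(N_α, ι_α) ⊆ U. Then O_J(N_upp, ι_upp) = j_α(O_J(N_α, ι_α)). -/
/-!
The image `j_α '' K` of a compact `K ⊆ N_α` is closed in `N_upp`: its preimage in `N_β` is
`ψ_{αβ} '' K` or `ψ_{βα} ⁻¹' K`, closed in either case because all `N_β` are Hausdorff.
The curves `j_α ∘ ι_α ∘ c_j` stay in `j_α '' closure U`, so their limits in `N_upp` lie in the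
range of the open embedding `j_α` and pull back to limits in `N_α`.
-/

open Topology Filter

section OSet

variable {M Z W J : Type*} [TopologicalSpace Z] [TopologicalSpace W] (c : J → ℝ → M)

lemma OSet_subset_of_isClosed {f : M → Z} {K : Set Z} (hK : IsClosed K)
    (hcK : ∀ j, ∀ t ∈ Set.Ioo (0 : ℝ) 1, f (c j t) ∈ K) : OSet c f ⊆ K := by
  rintro z (⟨j, t, ht, rfl⟩ | ⟨j, hz⟩)
  · exact hcK j t ht
  · have : (𝓝[Set.Ioo (0 : ℝ) 1] 1).NeBot := by
      rw [nhdsWithin_Ioo_eq_nhdsLT zero_lt_one]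
      infer_instance
    exact hK.mem_of_tendsto hz (eventually_nhdsWithin_of_forall (hcK j))

lemma image_OSet_subset {f : M → Z} {g : Z → W} (hg : Continuous g) :
    g '' OSet c f ⊆ OSet c (g ∘ f) := by
  rintro _ ⟨z, ⟨j, t, ht, rfl⟩ | ⟨j, hz⟩, rfl⟩
  · exact Or.inl ⟨j, t, ht, rfl⟩
  · exact Or.inr ⟨j, (hg.tendsto z).comp hz⟩

lemma OSet_comp_subset_image {f : M → Z} {g : Z → W} (hg : IsInducing g)
    (hrange : OSet c (g ∘ f) ⊆ Set.range g) : OSet c (g ∘ f) ⊆ g '' OSet c f := by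
  intro w hw
  rcases hw with ⟨j, t, ht, rfl⟩ | ⟨j, hw'⟩
  · exact ⟨f (c j t), Or.inl ⟨j, t, ht, rfl⟩, rfl⟩
  · obtain ⟨z, rfl⟩ := hrange (Or.inr ⟨j, hw'⟩)
    exact ⟨z, Or.inr ⟨j, hg.tendsto_nhds_iff.mpr hw'⟩, rfl⟩

lemma OSet_comp_eq_image {f : M → Z} {g : Z → W} (hg : IsInducing g)
    (hrange : OSet c (g ∘ f) ⊆ Set.range g) : OSet c (g ∘ f) = g '' OSet c f :=
  (OSet_comp_subset_image c hg hrange).antisymm (image_OSet_subset c hg.continuous)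

end OSet

section Gluing

variable {A : Type*} [LinearOrder A] {N : A → Type*} (ψ : ∀ α β : A, α ≤ β → N α → N β)

/-- The map `j_γ : N_γ → N_upp`. -/
def simIncl (γ : A) (p : N γ) : Quot (simRel ψ) :=
  Quot.mk _ ⟨γ, p⟩

lemma simIncl_map {a b : A} (h : a ≤ b) (p : N a) : simIncl ψ b (ψ a b h p) = simIncl ψ a p :=
  Quot.sound (Or.inr ⟨h, rfl⟩)

lemma simIncl_comp_eq_simIncl_comp {M : Type*} (ι : ∀ α, M → N α)
    (hψι : ∀ α β h, ψ α β h ∘ ι α = ι β) (a b : A) : simIncl ψ a ∘ ι a = simIncl ψ b ∘ ι b := by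
  have of_le : ∀ a b, a ≤ b → simIncl ψ a ∘ ι a = simIncl ψ b ∘ ι b := fun a b h =>
    funext fun m => by
      rw [← hψι a b h]
      exact (simIncl_map ψ h _).symm
  rcases le_total a b with h | h
  · exact of_le a b h
  · exact (of_le b a h).symm

section DirectedSystem

variable [DirectedSystem N (ψ · · ·)]

lemma map_self_of_directedSystem {a : A} (h : a ≤ a) (p : N a) : ψ a a h p = p :=
  DirectedSystem.map_self (f := (ψ · · ·)) p

lemma map_map_of_directedSystem {a b c : A} (h₁ : a ≤ b) (h₂ : b ≤ c) (p : N a) :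
    ψ b c h₂ (ψ a b h₁ p) = ψ a c (h₁.trans h₂) p :=
  DirectedSystem.map_map (f := (ψ · · ·)) h₁ h₂ p

lemma simRel_iff_of_le {a b : A} (h : a ≤ b) {p : N a} {q : N b} :
    simRel ψ ⟨a, p⟩ ⟨b, q⟩ ↔ ψ a b h p = q := by
  refine ⟨?_, fun e => Or.inl ⟨h, e⟩⟩
  rintro (⟨_, e⟩ | ⟨h', e⟩)
  · exact e
  · obtain rfl := le_antisymm h h'
    rw [map_self_of_directedSystem ψ] at e ⊢
    exact e.symm

/-- With injective transition maps, `∼` is the usual relation defining a direct limit. -/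
lemma simRel_iff_exists_map_eq (hψinj : ∀ α β h, Function.Injective (ψ α β h))
    {x y : Σ a, N a} :
    simRel ψ x y ↔ ∃ k, ∃ (hx : x.1 ≤ k) (hy : y.1 ≤ k), ψ _ k hx x.2 = ψ _ k hy y.2 := by
  obtain ⟨a, p⟩ := x
  obtain ⟨b, q⟩ := y
  constructor
  · rintro (⟨h, e⟩ | ⟨h, e⟩)
    · exact ⟨b, h, le_rfl, by rw [e, map_self_of_directedSystem ψ]⟩
    · exact ⟨a, le_rfl, h, by rw [e, map_self_of_directedSystem ψ]⟩
  · rintro ⟨k, ha, hb, e⟩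
    rcases le_total a b with h | h
    · refine Or.inl ⟨h, hψinj b k hb ?_⟩
      rwa [map_map_of_directedSystem ψ]
    · refine Or.inr ⟨h, hψinj a k ha ?_⟩
      rw [map_map_of_directedSystem ψ]
      exact e.symm

lemma simRel_equivalence_s8 (hψinj : ∀ α β h, Function.Injective (ψ α β h)) :
    Equivalence (simRel ψ) := by
  have key := fun {x y} => simRel_iff_exists_map_eq ψ hψinj (x := x) (y := y)
  refine ⟨fun x => key.mpr ⟨x.1, le_rfl, le_rfl, rfl⟩, Or.symm, fun hxy hyz => key.mpr ?_⟩
  obtain ⟨j, hx, hy, e₁⟩ := key.mp hxy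
  obtain ⟨k, hy', hz, e₂⟩ := key.mp hyz
  have hj : j ≤ max j k := le_max_left _ _
  have hk : k ≤ max j k := le_max_right _ _
  refine ⟨max j k, hx.trans hj, hz.trans hk, ?_⟩
  rw [← map_map_of_directedSystem ψ hx hj, e₁, map_map_of_directedSystem ψ,
    ← map_map_of_directedSystem ψ hz hk, ← e₂, map_map_of_directedSystem ψ]

lemma simIncl_eq_simIncl_iff_of_le (hψinj : ∀ α β h, Function.Injective (ψ α β h))
    {a b : A} (h : a ≤ b) {p : N a} {q : N b} :
    simIncl ψ a p = simIncl ψ b q ↔ ψ a b h p = q := by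
  rw [simIncl, simIncl, Quot.eq, (simRel_equivalence_s8 ψ hψinj).eqvGen_iff, simRel_iff_of_le]

lemma preimage_simIncl_image_of_le (hψinj : ∀ α β h, Function.Injective (ψ α β h))
    {γ β : A} (h : γ ≤ β) (V : Set (N γ)) :
    simIncl ψ β ⁻¹' (simIncl ψ γ '' V) = ψ γ β h '' V := by
  ext q
  exact exists_congr fun p => and_congr_right' (simIncl_eq_simIncl_iff_of_le ψ hψinj h)

lemma preimage_simIncl_image_of_ge (hψinj : ∀ α β h, Function.Injective (ψ α β h))
    {γ β : A} (h : β ≤ γ) (V : Set (N γ)) :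
    simIncl ψ β ⁻¹' (simIncl ψ γ '' V) = ψ β γ h ⁻¹' V := by
  ext q
  constructor
  · rintro ⟨p, hp, e⟩
    rwa [Set.mem_preimage, (simIncl_eq_simIncl_iff_of_le ψ hψinj h).mp e.symm]
  · exact fun hq => ⟨_, hq, simIncl_map ψ h q⟩

end DirectedSystem

section Topology

variable [∀ α, TopologicalSpace (N α)]

lemma isOpen_quot_simRel_iff {s : Set (Quot (simRel ψ))} :
    IsOpen s ↔ ∀ β, IsOpen (simIncl ψ β ⁻¹' s) := by
  rw [isOpen_coinduced, isOpen_sigma_iff]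
  rfl

lemma isClosed_quot_simRel_iff {s : Set (Quot (simRel ψ))} :
    IsClosed s ↔ ∀ β, IsClosed (simIncl ψ β ⁻¹' s) := by
  rw [isClosed_coinduced, isClosed_sigma_iff]
  rfl

lemma continuous_simIncl (γ : A) : Continuous (simIncl ψ γ) :=
  continuous_quot_mk.comp continuous_sigmaMk

variable [DirectedSystem N (ψ · · ·)]

lemma isOpenMap_simIncl (hψ : ∀ α β h, IsOpenEmbedding (ψ α β h)) (γ : A) :
    IsOpenMap (simIncl ψ γ) := by
  have hψinj : ∀ α β h, Function.Injective (ψ α β h) := fun α β h => (hψ α β h).injective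
  intro V hV
  refine (isOpen_quot_simRel_iff ψ).mpr fun β => ?_
  rcases le_total γ β with h | h
  · rw [preimage_simIncl_image_of_le ψ hψinj h]
    exact (hψ γ β h).isOpenMap V hV
  · rw [preimage_simIncl_image_of_ge ψ hψinj h]
    exact hV.preimage (hψ β γ h).continuous

lemma isOpenEmbedding_simIncl (hψ : ∀ α β h, IsOpenEmbedding (ψ α β h)) (γ : A) :
    IsOpenEmbedding (simIncl ψ γ) := by
  refine .of_continuous_injective_isOpenMap (continuous_simIncl ψ γ) (fun p q e => ?_)
    (isOpenMap_simIncl ψ hψ γ)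
  rw [simIncl_eq_simIncl_iff_of_le ψ (fun α β h => (hψ α β h).injective) le_rfl,
    map_self_of_directedSystem ψ] at e
  exact e

lemma isClosed_simIncl_image [∀ α, T2Space (N α)] (hψ : ∀ α β h, Continuous (ψ α β h))
    (hψinj : ∀ α β h, Function.Injective (ψ α β h)) {γ : A} {K : Set (N γ)} (hK : IsCompact K) :
    IsClosed (simIncl ψ γ '' K) := by
  refine (isClosed_quot_simRel_iff ψ).mpr fun β => ?_
  rcases le_total γ β with h | h
  · rw [preimage_simIncl_image_of_le ψ hψinj h]
    exact (hK.image (hψ γ β h)).isClosed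
  · rw [preimage_simIncl_image_of_ge ψ hψinj h]
    exact hK.isClosed.preimage (hψ β γ h)

end Topology

end Gluing

theorem OSet_eq_image_of_relatively_compact_general
    {M : Type*} [TopologicalSpace M]
    {A : Type*} [LinearOrder A]
    {N : A → Type*} [∀ α, TopologicalSpace (N α)]
    (ι : ∀ α, M → N α)
    (ψ : ∀ α β : A, α ≤ β → N α → N β)
    (hψ : ∀ (α β : A) (h : α ≤ β), IsOpenEmbedding (ψ α β h))
    (hψι : ∀ (α β : A) (h : α ≤ β), (ψ α β h) ∘ (ι α) = ι β)
    (hψid : ∀ (α : A) (h : α ≤ α), ψ α α h = id)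
    (hψcomp : ∀ (α β γ : A) (h₁ : α ≤ β) (h₂ : β ≤ γ),
      (ψ β γ h₂) ∘ (ψ α β h₁) = ψ α γ (h₁.trans h₂))
    (hT2 : ∀ α : A, T2Space (N α))
    (α₀ : A) {J : Type*} (c : J → ℝ → M) (α : A)
    (U : Set (N α)) (hUc : IsCompact (closure U))
    (hsub : OSet c (ι α) ⊆ U) :
    OSet c (fun m => Quot.mk (simRel ψ) ⟨α₀, ι α₀ m⟩) =
      (fun p : N α => Quot.mk (simRel ψ) ⟨α, p⟩) '' (OSet c (ι α)) := by
  have : DirectedSystem N (ψ · · ·) :=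
    ⟨fun α p => by rw [hψid]; rfl, fun _ _ _ h₁ h₂ p => congrFun (hψcomp _ _ _ h₁ h₂) p⟩
  have hψinj : ∀ α β h, Function.Injective (ψ α β h) := fun α β h => (hψ α β h).injective
  change OSet c (simIncl ψ α₀ ∘ ι α₀) = simIncl ψ α '' OSet c (ι α)
  rw [simIncl_comp_eq_simIncl_comp ψ ι hψι α₀ α]
  have hclosed : IsClosed (simIncl ψ α '' closure U) :=
    isClosed_simIncl_image ψ (fun α β h => (hψ α β h).continuous) hψinj hUc
  have hsubK : OSet c (simIncl ψ α ∘ ι α) ⊆ simIncl ψ α '' closure U :=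
    OSet_subset_of_isClosed c hclosed fun j t ht =>
      Set.mem_image_of_mem _ (subset_closure (hsub (Or.inl ⟨j, t, ht, rfl⟩)))
  exact OSet_comp_eq_image c (isOpenEmbedding_simIncl ψ hψ α).isInducing
    (hsubK.trans (Set.image_subset_range _ _))

/-- If all `N_α` are Hausdorff and `O_J(N_α, ι_α)` is contained in an open set `U ⊆ N_α`
with compact closure, then `O_J(N_upp, ι_upp) = j_α(O_J(N_α, ι_α))`. -/
theorem OSet_eq_image_of_relatively_compact
    {M : Type*} [TopologicalSpace M]
    {A : Type*} [LinearOrder A] [Nonempty A]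
    {N : A → Type*} [∀ α, TopologicalSpace (N α)]
    (ι : ∀ α, M → N α) (hι : ∀ α, IsOpenEmbedding (ι α))
    (ψ : ∀ α β : A, α ≤ β → N α → N β)
    (hψ : ∀ (α β : A) (h : α ≤ β), IsOpenEmbedding (ψ α β h))
    (hψι : ∀ (α β : A) (h : α ≤ β), (ψ α β h) ∘ (ι α) = ι β)
    (hψid : ∀ (α : A) (h : α ≤ α), ψ α α h = id)
    (hψcomp : ∀ (α β γ : A) (h₁ : α ≤ β) (h₂ : β ≤ γ),
      (ψ β γ h₂) ∘ (ψ α β h₁) = ψ α γ (h₁.trans h₂))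
    (hT2 : ∀ α : A, T2Space (N α))
    (α₀ : A) {J : Type*} (c : J → ℝ → M) (α : A)
    (U : Set (N α)) (hU : IsOpen U) (hUc : IsCompact (closure U))
    (hsub : OSet c (ι α) ⊆ U) :
    OSet c (fun m => Quot.mk (simRel ψ) ⟨α₀, ι α₀ m⟩) =
      (fun p : N α => Quot.mk (simRel ψ) ⟨α, p⟩) '' (OSet c (ι α)) :=
  OSet_eq_image_of_relatively_compact_general ι ψ hψ hψι hψid hψcomp hT2 α₀ c α U hUc hsub
end

section
/- Let H be a topological space and suppose that every point of every N_α (α ∈ A) has an open neighbourhood homeomorphic to an open subset of H. Then every point of N_upp has an open neighbourhood homeomorphic to an open subset of H. -/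
open Topology Filter

/-- If every point of every `N_α` has an open neighbourhood homeomorphic to an open subset of
`H`, then so does every point of the quotient `N_upp`. -/
theorem quotient_locally_modelled
    {M : Type*} [TopologicalSpace M]
    {A : Type*} [LinearOrder A] [Nonempty A]
    {N : A → Type*} [∀ α, TopologicalSpace (N α)]
    (ι : ∀ α, M → N α) (hι : ∀ α, IsOpenEmbedding (ι α))
    (ψ : ∀ α β : A, α ≤ β → N α → N β)
    (hψ : ∀ (α β : A) (h : α ≤ β), IsOpenEmbedding (ψ α β h))
    (hψι : ∀ (α β : A) (h : α ≤ β), (ψ α β h) ∘ (ι α) = ι β)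
    (hψid : ∀ (α : A) (h : α ≤ α), ψ α α h = id)
    (hψcomp : ∀ (α β γ : A) (h₁ : α ≤ β) (h₂ : β ≤ γ),
      (ψ β γ h₂) ∘ (ψ α β h₁) = ψ α γ (h₁.trans h₂))
    {H : Type*} [TopologicalSpace H]
    (hloc : ∀ (α : A) (x : N α), ∃ U : Set (N α), IsOpen U ∧ x ∈ U ∧
      ∃ V : Set H, IsOpen V ∧ Nonempty (↥U ≃ₜ ↥V)) :
    ∀ y : Quot (simRel ψ), ∃ W : Set (Quot (simRel ψ)), IsOpen W ∧ y ∈ W ∧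
      ∃ V : Set H, IsOpen V ∧ Nonempty (↥W ≃ₜ ↥V) := by
  -- `simRel ψ` is an equivalence relation
  have hequiv : Equivalence (simRel ψ) := by
    constructor
    · intro x
      exact Or.inl ⟨le_refl _, by rw [hψid]; rfl⟩
    · intro x y h
      rcases h with ⟨h, e⟩ | ⟨h, e⟩
      · exact Or.inr ⟨h, e⟩
      · exact Or.inl ⟨h, e⟩
    · rintro ⟨α, p⟩ ⟨β, q⟩ ⟨γ, r⟩ hxy hyz
      rcases hxy with ⟨h1, e1⟩ | ⟨h1, e1⟩ <;> rcases hyz with ⟨h2, e2⟩ | ⟨h2, e2⟩ <;>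
        dsimp only at *
      · refine Or.inl ⟨h1.trans h2, ?_⟩
        rw [← e2, ← e1, ← Function.comp_apply (f := ψ β γ h2), hψcomp]
      · rcases le_total α γ with hag | hga
        · refine Or.inl ⟨hag, (hψ γ β h2).injective ?_⟩
          rw [← Function.comp_apply (f := ψ γ β h2), hψcomp, e1, e2]
        · refine Or.inr ⟨hga, (hψ α β h1).injective ?_⟩
          rw [← Function.comp_apply (f := ψ α β h1), hψcomp, e2, e1]
      · rcases le_total α γ with hag | hga
        · refine Or.inl ⟨hag, ?_⟩
          rw [← e1, ← Function.comp_apply (f := ψ α γ hag), hψcomp, e2]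
        · refine Or.inr ⟨hga, ?_⟩
          rw [← e2, ← Function.comp_apply (f := ψ γ α hga), hψcomp, e1]
      · refine Or.inr ⟨h2.trans h1, ?_⟩
        rw [← e1, ← e2, ← Function.comp_apply (f := ψ β α h1), hψcomp]
  have hmk : ∀ x y : Σ α, N α,
      Quot.mk (simRel ψ) x = Quot.mk (simRel ψ) y ↔ simRel ψ x y := by
    intro x y
    rw [Quot.eq, hequiv.eqvGen_eq]
  intro y
  obtain ⟨⟨α, p⟩, rfl⟩ := Quot.exists_rep y
  obtain ⟨U, hUopen, hpU, V, hVopen, ⟨e⟩⟩ := hloc α p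
  set j : N α → Quot (simRel ψ) := fun q => Quot.mk (simRel ψ) ⟨α, q⟩ with hj
  have hjc : Continuous j := continuous_quot_mk.comp continuous_sigmaMk
  have hjinj : Function.Injective j := by
    intro a b hab
    rcases (hmk _ _).1 hab with ⟨h, e'⟩ | ⟨h, e'⟩
    · rw [hψid] at e'; exact e'
    · rw [hψid] at e'; exact e'.symm
  have hjopen : IsOpenMap j := by
    intro S hS
    rw [isOpen_coinduced, isOpen_sigma_iff]
    intro β
    have hpre : Sigma.mk β ⁻¹' (Quot.mk (simRel ψ) ⁻¹' (j '' S)) =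
        {q : N β | ∃ p ∈ S, simRel ψ ⟨α, p⟩ ⟨β, q⟩} := by
      ext q
      simp only [Set.mem_preimage, Set.mem_image, Set.mem_setOf_eq]
      constructor
      · rintro ⟨a, haS, hq⟩
        exact ⟨a, haS, (hmk _ _).1 hq⟩
      · rintro ⟨a, haS, hq⟩
        exact ⟨a, haS, (hmk _ _).2 hq⟩
    rw [hpre]
    rcases le_total α β with hab | hba
    · have : {q : N β | ∃ p ∈ S, simRel ψ ⟨α, p⟩ ⟨β, q⟩} = ψ α β hab '' S := by
        ext q
        simp only [Set.mem_setOf_eq, Set.mem_image]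
        constructor
        · rintro ⟨a, haS, ⟨h, e'⟩ | ⟨h, e'⟩⟩
          · exact ⟨a, haS, e'⟩
          · have hβα : α = β := le_antisymm hab h
            subst hβα
            rw [hψid] at e'
            exact ⟨a, haS, by rw [hψid]; simpa using e'.symm⟩
        · rintro ⟨a, haS, rfl⟩
          exact ⟨a, haS, Or.inl ⟨hab, rfl⟩⟩
      rw [this]
      exact (hψ α β hab).isOpenMap _ hS
    · have : {q : N β | ∃ p ∈ S, simRel ψ ⟨α, p⟩ ⟨β, q⟩} = ψ β α hba ⁻¹' S := by
        ext q
        simp only [Set.mem_setOf_eq, Set.mem_preimage]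
        constructor
        · rintro ⟨a, haS, ⟨h, e'⟩ | ⟨h, e'⟩⟩
          · have hβα : α = β := le_antisymm h hba
            subst hβα
            simp only [hψid, id_eq] at e'
            rw [hψid]
            show id q ∈ S
            rw [id_eq, ← e']
            exact haS
          · rw [e']; exact haS
        · intro hq
          exact ⟨ψ β α hba q, hq, Or.inr ⟨hba, rfl⟩⟩
      rw [this]
      exact (hψ β α hba).continuous.isOpen_preimage _ hS
  have hjoe : IsOpenEmbedding j :=
    IsOpenEmbedding.of_continuous_injective_isOpenMap hjc hjinj hjopen
  refine ⟨j '' U, hjopen _ hUopen, ⟨p, hpU, rfl⟩, V, hVopen, ?_⟩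
  have hioe := hjoe.comp hUopen.isOpenEmbedding_subtypeVal
  have hrange : Set.range (j ∘ (Subtype.val : U → N α)) = j '' U := by
    rw [Set.range_comp, Subtype.range_coe]
  exact ⟨(((hioe.isEmbedding.toHomeomorph).trans
      (Homeomorph.setCongr hrange)).symm.trans e)⟩
end

section
/- For every countable dense subset {X_i : i ∈ ℕ} of T and every countable basis {U_i : i ∈ ℕ} of the topology of M, the family {O(X_i, q) : i ∈ ℕ, q ∈ ℚ, q > 0} ∪ {ι(U_i) : i ∈ ℕ} is a countable basis for the topology of N; in particular N is second countable. -/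
/-!
Near a point of `ι(M)` the images of basic open sets of `M` suffice, since `ι` is an open
embedding. Near a point `p ∉ ι(M)`, every neighbourhood contains some `O(Xₙ, ε)` with
`p ∈ O(Xₙ, r)` for all `r > 0`; picking a dense point `X i` within `ε/2` of `Xₙ` and a rational
`q` with `B(Xₙ, r) ⊆ B(X i, q) ⊆ B(Xₙ, ε)`, monotonicity of `O` traps `O(X i, q)` between them.
-/

open Topology Filter TopologicalSpace

lemma Metric.exists_rat_ball_subset_ball_subset_ball {T : Type*} [PseudoMetricSpace T]
    {x y : T} {ε : ℝ} (hxy : dist x y < ε / 2) :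
    ∃ q : ℚ, 0 < q ∧ ∃ r > 0, ball x r ⊆ ball y q ∧ ball y q ⊆ ball x ε := by
  obtain ⟨q, hdq, hqε⟩ := exists_rat_btwn (by linarith : dist x y < ε - dist x y)
  have hq : (0 : ℝ) < q := dist_nonneg.trans_lt hdq
  refine ⟨q, by exact_mod_cast hq, q - dist x y, sub_pos.2 hdq, ?_, ?_⟩
  · exact ball_subset_ball' (by linarith)
  · exact ball_subset_ball' (by rw [dist_comm]; linarith)

lemma exists_image_mem_subset_of_isTopologicalBasis {M N : Type*} [TopologicalSpace M]
    [TopologicalSpace N] {ι : M → N} (hι : Continuous ι) {B : Set (Set M)}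
    (hB : IsTopologicalBasis B) {m : M} {V : Set N} (hm : ι m ∈ V) (hV : IsOpen V) :
    ∃ W ∈ B, ι m ∈ ι '' W ∧ ι '' W ⊆ V := by
  obtain ⟨W, hWB, hmW, hWV⟩ := hB.exists_subset_of_mem_open hm (hV.preimage hι)
  exact ⟨W, hWB, Set.mem_image_of_mem ι hmW, Set.image_subset_iff.2 hWV⟩

lemma exists_rat_thickening_mem_subset {T N : Type*} [PseudoMetricSpace T]
    {O : T → ℝ → Set N}
    (hOmono : ∀ (X Y : T) (r s : ℝ), 0 < r → 0 < s →
      Metric.ball X r ⊆ Metric.ball Y s → O X r ⊆ O Y s)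
    {X : ℕ → T} (hX : DenseRange X) {Y : T} {p : N} (hp : ∀ r : ℝ, 0 < r → p ∈ O Y r)
    {ε : ℝ} (hε : 0 < ε) :
    ∃ (i : ℕ) (q : ℚ), 0 < q ∧ p ∈ O (X i) q ∧ O (X i) q ⊆ O Y ε := by
  obtain ⟨i, hi⟩ := hX.exists_dist_lt Y (half_pos hε)
  obtain ⟨q, hq, r, hr, hrq, hqε⟩ := Metric.exists_rat_ball_subset_ball_subset_ball hi
  have hq' : (0 : ℝ) < q := by exact_mod_cast hq
  exact ⟨i, q, hq, hOmono _ _ _ _ hr hq' hrq (hp r hr), hOmono _ _ _ _ hq' hε hqε⟩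

theorem isTopologicalBasis_thickenings_general
    {M : Type*} [TopologicalSpace M]
    {N : Type*} [TopologicalSpace N]
    (ι : M → N) (hι : IsOpenEmbedding ι)
    {T : Type*} [MetricSpace T]
    (O : T → ℝ → Set N)
    (hOopen : ∀ (X : T) (r : ℝ), 0 < r → IsOpen (O X r))
    (hOmono : ∀ (X Y : T) (r s : ℝ), 0 < r → 0 < s →
      Metric.ball X r ⊆ Metric.ball Y s → O X r ⊆ O Y s)
    (hbdry : ∀ p : N, p ∉ Set.range ι →
      ∃ Xs : ℕ → T, (∀ (n : ℕ) (r : ℝ), 0 < r → p ∈ O (Xs n) r) ∧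
        (𝓝 p).HasBasis (fun nm : ℕ × ℕ => 1 ≤ nm.2)
          (fun nm => O (Xs nm.1) (1 / (nm.2 : ℝ)))) :
    ∀ X : ℕ → T, DenseRange X →
      ∀ U : ℕ → Set M, TopologicalSpace.IsTopologicalBasis (Set.range U) →
        TopologicalSpace.IsTopologicalBasis
            ({S : Set N | ∃ (i : ℕ) (q : ℚ), 0 < q ∧ S = O (X i) (q : ℝ)} ∪
              {S : Set N | ∃ i : ℕ, S = ι '' (U i)}) ∧
          SecondCountableTopology N := by
  intro X hX U hU
  have hbasis : IsTopologicalBasis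
      ({S : Set N | ∃ (i : ℕ) (q : ℚ), 0 < q ∧ S = O (X i) (q : ℝ)} ∪
        {S : Set N | ∃ i : ℕ, S = ι '' (U i)}) := by
    refine isTopologicalBasis_of_isOpen_of_nhds ?_ fun p V hp hV ↦ ?_
    · rintro S (⟨i, q, hq, rfl⟩ | ⟨i, rfl⟩)
      · exact hOopen _ _ (by exact_mod_cast hq)
      · exact hι.isOpenMap _ (hU.isOpen ⟨i, rfl⟩)
    by_cases hpι : p ∈ Set.range ι
    · obtain ⟨m, rfl⟩ := hpι
      obtain ⟨_, ⟨i, rfl⟩, hmU, hUV⟩ :=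
        exists_image_mem_subset_of_isTopologicalBasis hι.continuous hU hp hV
      exact ⟨ι '' U i, Or.inr ⟨i, rfl⟩, hmU, hUV⟩
    · obtain ⟨Xs, hmem, hB⟩ := hbdry p hpι
      obtain ⟨⟨n, m⟩, hm, hOV⟩ := hB.mem_iff.1 (hV.mem_nhds hp)
      obtain ⟨i, q, hq, hpO, hOO⟩ := exists_rat_thickening_mem_subset hOmono hX (hmem n)
        (one_div_pos.2 (Nat.cast_pos.2 hm))
      exact ⟨O (X i) q, Or.inl ⟨i, q, hq, rfl⟩, hpO, hOO.trans hOV⟩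
  refine ⟨hbasis, hbasis.secondCountableTopology (.union ?_ ?_)⟩
  · refine (Set.countable_range fun iq : ℕ × ℚ ↦ O (X iq.1) iq.2).mono ?_
    rintro _ ⟨i, q, -, rfl⟩
    exact ⟨(i, q), rfl⟩
  · refine (Set.countable_range fun i ↦ ι '' U i).mono ?_
    rintro _ ⟨i, rfl⟩
    exact ⟨i, rfl⟩

/-- Abstract second-countability lemma: if `ι : M → N` is a dense open embedding of a
second-countable space, `(T,d)` is a separable metric space, and `O : T → ℝ → Set N` assigns
open "thickenings" satisfying monotonicity under inclusion of metric balls and furnishing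
neighbourhood bases at the points of `N \ ι(M)`, then for any countable dense subset
`{X i}` of `T` and any countable basis `{U i}` of `M`, the family
`{O (X i) q : q ∈ ℚ, q > 0} ∪ {ι(U i)}` is a countable basis of `N`; in particular `N` is
second countable. -/
theorem isTopologicalBasis_thickenings
    {M : Type*} [TopologicalSpace M] [SecondCountableTopology M]
    {N : Type*} [TopologicalSpace N]
    (ι : M → N) (hι : IsOpenEmbedding ι) (hdense : DenseRange ι)
    {T : Type*} [MetricSpace T] [TopologicalSpace.SeparableSpace T]
    (O : T → ℝ → Set N)
    (hOopen : ∀ (X : T) (r : ℝ), 0 < r → IsOpen (O X r))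
    (hOmono : ∀ (X Y : T) (r s : ℝ), 0 < r → 0 < s →
      Metric.ball X r ⊆ Metric.ball Y s → O X r ⊆ O Y s)
    (hbdry : ∀ p : N, p ∉ Set.range ι →
      ∃ Xs : ℕ → T, (∀ (n : ℕ) (r : ℝ), 0 < r → p ∈ O (Xs n) r) ∧
        (𝓝 p).HasBasis (fun nm : ℕ × ℕ => 1 ≤ nm.2)
          (fun nm => O (Xs nm.1) (1 / (nm.2 : ℝ)))) :
    ∀ X : ℕ → T, DenseRange X →
      ∀ U : ℕ → Set M, TopologicalSpace.IsTopologicalBasis (Set.range U) →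
        TopologicalSpace.IsTopologicalBasis
            ({S : Set N | ∃ (i : ℕ) (q : ℚ), 0 < q ∧ S = O (X i) (q : ℝ)} ∪
              {S : Set N | ∃ i : ℕ, S = ι '' (U i)}) ∧
          SecondCountableTopology N :=
  isTopologicalBasis_thickenings_general ι hι O hOopen hOmono hbdry
end
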